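/- arXiv:1810.12202 — 2 statements merged into one kernel-verified Lean document; each statement's English description precedes it below -/
import Mathlib

section
/- Let X and Y be points of the unit square [0,1]² and consider the integral of the Euclidean distance ‖X − Y‖ over ([0,1]²) × ([0,1]²) with respect to the 4-dimensional Lebesgue measure. This integral equals (2 + √2 + 5·ln(1 + √2))/15. (Equivalently, the expected Euclidean distance between two independent uniformly distributed points of the unit square is (2 + √2 + 5·ln(1 + √2))/15 ≈ 0.52.) -/
/-!
For an even continuous `h`, `∫₀ᵃ∫₀ᵃ h(x - u) du dx = 2 ∫₀ᵃ (a - s) h(s) ds`. After regrouping the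
coordinates as `((x₁, x₂), (y₁, y₂))`, applying this first in the `y`-coordinates and then in the
`x`-coordinates turns the integral into `4 ∫₀¹∫₀¹ (1 - s)(1 - t) √(s² + t²) dt ds`. That integrand
is symmetric in `s` and `t`, so it suffices to integrate over the triangle `t ≤ s`, where
`t √(s² + t²)/2 + s² arsinh(t/s)/2 - (s² + t²)^(3/2)/3` is a primitive in `t` and leaves a polynomial
in `s`.
-/

open MeasureTheory Real Set

section ProdProdProdComm

variable {α β γ δ : Type*} [MeasurableSpace α] [MeasurableSpace β] [MeasurableSpace γ]
  [MeasurableSpace δ]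

variable (α β γ δ) in
def MeasurableEquiv.prodProdProdComm : (α × β) × γ × δ ≃ᵐ (α × γ) × β × δ :=
  prodAssoc.trans <| (prodCongr (refl α) <|
    prodAssoc.symm.trans <| (prodCongr prodComm (refl δ)).trans prodAssoc).trans prodAssoc.symm

@[simp]
theorem MeasurableEquiv.prodProdProdComm_apply (p : (α × β) × γ × δ) :
    prodProdProdComm α β γ δ p = ((p.1.1, p.2.1), (p.1.2, p.2.2)) := rfl

theorem MeasureTheory.measurePreserving_prodProdProdComm (μa : Measure α) (μb : Measure β)
    (μc : Measure γ) (μd : Measure δ) [SFinite μa] [SFinite μb] [SFinite μc] [SFinite μd] :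
    MeasurePreserving (MeasurableEquiv.prodProdProdComm α β γ δ)
      ((μa.prod μb).prod (μc.prod μd)) ((μa.prod μc).prod (μb.prod μd)) :=
  (measurePreserving_prodAssoc μa μb (μc.prod μd)).trans <|
    ((MeasurePreserving.id μa).prod <|
      (measurePreserving_prodAssoc μb μc μd).symm.trans <|
        ((Measure.measurePreserving_swap (μ := μb) (ν := μc)).prod (MeasurePreserving.id μd)).trans
          (measurePreserving_prodAssoc μc μb μd)).trans
      (measurePreserving_prodAssoc μa μc (μb.prod μd)).symm

theorem MeasureTheory.setIntegral_prod_prod_prod_comm {E : Type*} [NormedAddCommGroup E]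
    [NormedSpace ℝ E] (μa : Measure α) (μb : Measure β) (μc : Measure γ) (μd : Measure δ)
    [SFinite μa] [SFinite μb] [SFinite μc] [SFinite μd] (f : (α × γ) × β × δ → E)
    (s : Set α) (t : Set β) (u : Set γ) (v : Set δ) :
    ∫ p in (s ×ˢ t) ×ˢ (u ×ˢ v), f (MeasurableEquiv.prodProdProdComm α β γ δ p)
        ∂(μa.prod μb).prod (μc.prod μd)
      = ∫ q in (s ×ˢ u) ×ˢ (t ×ˢ v), f q ∂(μa.prod μc).prod (μb.prod μd) := by
  rw [← (measurePreserving_prodProdProdComm μa μb μc μd).setIntegral_preimage_emb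
    (MeasurableEquiv.measurableEmbedding _)]
  congr! 2
  ext p
  simp only [mem_preimage, mem_prod, MeasurableEquiv.prodProdProdComm_apply]
  tauto

end ProdProdProdComm

theorem setIntegral_Icc_prod_Icc {E : Type*} [NormedAddCommGroup E] [NormedSpace ℝ E]
    [CompleteSpace E] {f : ℝ × ℝ → E} (hf : Continuous f) {a b c d : ℝ} (hab : a ≤ b)
    (hcd : c ≤ d) :
    ∫ p in Icc a b ×ˢ Icc c d, f p = ∫ x in a..b, ∫ y in c..d, f (x, y) := by
  rw [Measure.volume_eq_prod,
    setIntegral_prod f (hf.continuousOn.integrableOn_compact (isCompact_Icc.prod isCompact_Icc)),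
    intervalIntegral.integral_of_le hab, integral_Icc_eq_integral_Ioc]
  congr! 2 with x
  rw [intervalIntegral.integral_of_le hcd, integral_Icc_eq_integral_Ioc]

theorem intervalIntegral_triangle_swap {E : Type*} [NormedAddCommGroup E] [NormedSpace ℝ E]
    [CompleteSpace E] {f : ℝ → ℝ → E} (hf : Continuous f.uncurry) {a b : ℝ} (hab : a ≤ b) :
    ∫ x in a..b, ∫ y in x..b, f x y = ∫ y in a..b, ∫ x in a..y, f x y := by
  set G : ℝ × ℝ → E := {p | p.1 < p.2}.indicator f.uncurry
  have hG : IntegrableOn G (uIoc a b ×ˢ uIoc a b) :=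
    ((hf.continuousOn.integrableOn_compact (isCompact_uIcc.prod isCompact_uIcc)).mono_set
      (prod_mono uIoc_subset_uIcc uIoc_subset_uIcc)).indicator
      (measurableSet_lt measurable_fst measurable_snd)
  have row : ∀ x ∈ uIcc a b, ∫ y in a..b, G (x, y) = ∫ y in x..b, f x y := by
    intro x hx
    rw [uIcc_of_le hab] at hx
    have : (fun y => G (x, y)) = (Ioi x).indicator (f x) := by
      ext y; simp [G, indicator]
    rw [intervalIntegral.integral_of_le hab, intervalIntegral.integral_of_le hx.2, this,
      setIntegral_indicator measurableSet_Ioi, Ioc_inter_Ioi, max_eq_right hx.1]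
  have col : ∀ y ∈ uIcc a b, ∫ x in a..b, G (x, y) = ∫ x in a..y, f x y := by
    intro y hy
    rw [uIcc_of_le hab] at hy
    have : (fun x => G (x, y)) = (Iio y).indicator (f · y) := by
      ext x; simp [G, indicator]
    rw [intervalIntegral.integral_of_le hab, intervalIntegral.integral_of_le hy.1, this,
      setIntegral_indicator measurableSet_Iio, integral_Ioc_eq_integral_Ioo]
    congr 2
    ext x
    simp only [mem_inter_iff, mem_Ioc, mem_Iio, mem_Ioo]
    grind
  calc ∫ x in a..b, ∫ y in x..b, f x y = ∫ x in a..b, ∫ y in a..b, G (x, y) :=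
        (intervalIntegral.integral_congr row).symm
    _ = ∫ y in a..b, ∫ x in a..b, G (x, y) :=
        intervalIntegral_intervalIntegral_swap (F := Function.curry G) hG
    _ = ∫ y in a..b, ∫ x in a..y, f x y := intervalIntegral.integral_congr col

theorem intervalIntegral_intervalIntegral_comp_sub {h : ℝ → ℝ} (hc : Continuous h)
    (heven : ∀ s, h (-s) = h s) {a : ℝ} (ha : 0 ≤ a) :
    ∫ x in 0..a, ∫ u in 0..a, h (x - u) = 2 * ∫ s in 0..a, (a - s) * h s := by
  set H : ℝ → ℝ := fun y => ∫ s in 0..y, h s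
  have hHcont : Continuous H :=
    intervalIntegral.continuous_primitive (fun _ _ => hc.intervalIntegrable _ _) 0
  have hHodd : ∀ y, H (-y) = - H y := by
    intro y
    have := intervalIntegral.integral_comp_neg (a := 0) (b := y) h
    simp only [heven, neg_zero] at this
    simp only [H, this, intervalIntegral.integral_symm (-y) 0]
  have inner : ∀ x, ∫ u in 0..a, h (x - u) = H x - H (x - a) := by
    intro x
    rw [intervalIntegral.integral_comp_sub_left, sub_zero,
      intervalIntegral.integral_interval_sub_left (hc.intervalIntegrable _ _)
        (hc.intervalIntegrable _ _)]
  have shifted : ∫ x in 0..a, H (x - a) = - ∫ x in 0..a, H x := by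
    rw [intervalIntegral.integral_comp_sub_right, zero_sub, sub_self,
      ← neg_zero, ← intervalIntegral.integral_comp_neg, neg_zero]
    simp only [hHodd, intervalIntegral.integral_neg]
  have primitive : ∫ x in 0..a, H x = ∫ s in 0..a, (a - s) * h s := by
    rw [← intervalIntegral_triangle_swap (f := fun s _ => h s) (by fun_prop) ha]
    simp
  simp only [inner]
  have hHshift : Continuous fun x => H (x - a) := by fun_prop
  rw [intervalIntegral.integral_sub (hHcont.intervalIntegrable _ _)
    (hHshift.intervalIntegrable _ _), shifted, primitive]
  ring

theorem setIntegral_Icc_prod_Icc_comp_sub {h : ℝ → ℝ} (hc : Continuous h) (heven : ∀ s, h (-s) = h s)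
    {a : ℝ} (ha : 0 ≤ a) :
    ∫ p in Icc 0 a ×ˢ Icc 0 a, h (p.1 - p.2) = 2 * ∫ s in 0..a, (a - s) * h s := by
  rw [setIntegral_Icc_prod_Icc (by fun_prop) ha ha]
  exact intervalIntegral_intervalIntegral_comp_sub hc heven ha

theorem intervalIntegral_intervalIntegral_eq_two_mul_of_symm {f : ℝ → ℝ → ℝ}
    (hf : Continuous f.uncurry) (hsymm : ∀ s t, f s t = f t s) {a b : ℝ} (hab : a ≤ b) :
    ∫ s in a..b, ∫ t in a..b, f s t = 2 * ∫ s in a..b, ∫ t in a..s, f s t := by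
  have hsplit : ∀ s, ∫ t in a..b, f s t = (∫ t in a..s, f s t) + ∫ t in s..b, f s t := fun s =>
    (intervalIntegral.integral_add_adjacent_intervals
      ((by fun_prop : Continuous (f s)).intervalIntegrable _ _)
      ((by fun_prop : Continuous (f s)).intervalIntegrable _ _)).symm
  have hlower : Continuous fun s => ∫ t in a..s, f s t := by fun_prop
  have hupper : Continuous fun s => ∫ t in s..b, f s t := by
    simp_rw [intervalIntegral.integral_symm b]
    fun_prop
  simp only [hsplit]
  rw [intervalIntegral.integral_add (hlower.intervalIntegrable _ _)
    (hupper.intervalIntegrable _ _), intervalIntegral_triangle_swap hf hab]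
  have hflip : ∫ t in a..b, ∫ s in a..t, f s t = ∫ t in a..b, ∫ s in a..t, f t s :=
    intervalIntegral.integral_congr fun t _ => intervalIntegral.integral_congr fun s _ => hsymm s t
  rw [hflip]
  ring

theorem hasDerivAt_sqrt_sq_add_sq {s : ℝ} (hs : s ≠ 0) (t : ℝ) :
    HasDerivAt (fun t => √(s ^ 2 + t ^ 2)) (t / √(s ^ 2 + t ^ 2)) t := by
  have hpos : s ^ 2 + t ^ 2 ≠ 0 := by positivity
  convert ((hasDerivAt_pow 2 t).const_add (s ^ 2)).sqrt hpos using 1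
  ring

theorem hasDerivAt_primitive_sqrt_sq_add_sq {s : ℝ} (hs : 0 < s) (t : ℝ) :
    HasDerivAt (fun t => (t * √(s ^ 2 + t ^ 2) + s ^ 2 * arsinh (t / s)) / 2)
      √(s ^ 2 + t ^ 2) t := by
  have hsq : √(1 + (t / s) ^ 2) = √(s ^ 2 + t ^ 2) / s := by
    rw [show 1 + (t / s) ^ 2 = (s ^ 2 + t ^ 2) / s ^ 2 by field_simp, sqrt_div' _ (sq_nonneg s),
      sqrt_sq hs.le]
  have := (((hasDerivAt_id t).mul (hasDerivAt_sqrt_sq_add_sq hs.ne' t)).add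
    (((hasDerivAt_id t).div_const s).arsinh.const_mul (s ^ 2))).div_const 2
  refine this.congr_deriv ?_
  rw [id, hsq, smul_eq_mul]
  field_simp
  rw [sq_sqrt (by positivity)]
  ring

theorem integral_one_sub_mul_sqrt_sq_add_sq {s : ℝ} (hs : 0 ≤ s) :
    ∫ t in 0..s, (1 - t) * √(s ^ 2 + t ^ 2)
      = (√2 + log (1 + √2)) / 2 * s ^ 2 + (1 - 2 * √2) / 3 * s ^ 3 := by
  rcases hs.eq_or_lt with rfl | hs
  · simp
  have hderiv : ∀ t, HasDerivAt
      (fun t => (t * √(s ^ 2 + t ^ 2) + s ^ 2 * arsinh (t / s)) / 2 - √(s ^ 2 + t ^ 2) ^ 3 / 3)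
      ((1 - t) * √(s ^ 2 + t ^ 2)) t := by
    intro t
    refine ((hasDerivAt_primitive_sqrt_sq_add_sq hs t).sub
      (((hasDerivAt_sqrt_sq_add_sq hs.ne' t).pow 3).div_const 3)).congr_deriv ?_
    field_simp
    ring
  rw [intervalIntegral.integral_eq_sub_of_hasDerivAt (fun t _ => hderiv t)
    ((by fun_prop : Continuous _).intervalIntegrable _ _)]
  have h2 : √(s ^ 2 + s ^ 2) = √2 * s := by
    rw [← two_mul, sqrt_mul zero_le_two, sqrt_sq hs.le]
  have hars : arsinh 1 = log (1 + √2) := by norm_num [arsinh]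
  simp only [h2, div_self hs.ne', hars, zero_pow two_ne_zero, add_zero, sqrt_sq hs.le, zero_div,
    arsinh_zero, mul_zero, zero_mul]
  have : √2 ^ 2 = 2 := sq_sqrt zero_le_two
  linear_combination (-(s ^ 3) * √2 / 3) * this

theorem integral_one_sub_mul_integral_one_sub_mul_sqrt :
    ∫ s in 0..1, (1 - s) * ∫ t in 0..1, (1 - t) * √(s ^ 2 + t ^ 2)
      = (2 + √2 + 5 * log (1 + √2)) / 60 := by
  set c := (√2 + log (1 + √2)) / 2
  set d := (1 - 2 * √2) / 3
  have hsymm : ∀ s t : ℝ, (1 - s) * ((1 - t) * √(s ^ 2 + t ^ 2))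
      = (1 - t) * ((1 - s) * √(t ^ 2 + s ^ 2)) := fun s t => by
    rw [add_comm (s ^ 2)]; ring
  have hlower : ∀ s ∈ uIcc (0:ℝ) 1,
      ∫ t in 0..s, (1 - s) * ((1 - t) * √(s ^ 2 + t ^ 2)) = (1 - s) * (c * s ^ 2 + d * s ^ 3) := by
    intro s hs
    rw [uIcc_of_le zero_le_one] at hs
    rw [intervalIntegral.integral_const_mul, integral_one_sub_mul_sqrt_sq_add_sq hs.1]
  calc ∫ s in 0..1, (1 - s) * ∫ t in 0..1, (1 - t) * √(s ^ 2 + t ^ 2)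
      = ∫ s in 0..1, ∫ t in 0..1, (1 - s) * ((1 - t) * √(s ^ 2 + t ^ 2)) := by
        simp only [intervalIntegral.integral_const_mul]
    _ = 2 * ∫ s in 0..1, (1 - s) * (c * s ^ 2 + d * s ^ 3) := by
        rw [intervalIntegral_intervalIntegral_eq_two_mul_of_symm (by fun_prop) hsymm zero_le_one,
          intervalIntegral.integral_congr hlower]
    _ = (2 + √2 + 5 * log (1 + √2)) / 60 := by
        have : (fun s : ℝ => (1 - s) * (c * s ^ 2 + d * s ^ 3))
            = fun s => c * s ^ 2 + (d - c) * s ^ 3 - d * s ^ 4 := by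
          ext s; ring
        simp only [this]
        rw [intervalIntegral.integral_sub, intervalIntegral.integral_add]
        · simp only [intervalIntegral.integral_const_mul, integral_pow]
          simp only [c, d]
          ring
        all_goals exact Continuous.intervalIntegrable (by fun_prop) _ _

/-- The integral of the Euclidean distance between two points of the unit square,
taken over `([0,1]²) × ([0,1]²)` with respect to 4-dimensional Lebesgue measure,
equals `(2 + √2 + 5·ln(1 + √2))/15 ≈ 0.52`. -/
theorem stmt_1 :
    ∫ p in ((Set.Icc (0:ℝ) 1 ×ˢ Set.Icc (0:ℝ) 1) ×ˢ (Set.Icc (0:ℝ) 1 ×ˢ Set.Icc (0:ℝ) 1)),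
        Real.sqrt ((p.1.1 - p.2.1) ^ 2 + (p.1.2 - p.2.2) ^ 2)
      = (2 + Real.sqrt 2 + 5 * Real.log (1 + Real.sqrt 2)) / 15 := by
  set I := Icc (0:ℝ) 1
  set k : ℝ → ℝ := fun s => 2 * ∫ t in 0..1, (1 - t) * √(s ^ 2 + t ^ 2)
  have hk (z : ℝ × ℝ) :
      ∫ w in I ×ˢ I, √((z.1 - z.2) ^ 2 + (w.1 - w.2) ^ 2) = k (z.1 - z.2) :=
    setIntegral_Icc_prod_Icc_comp_sub (h := fun b => √((z.1 - z.2) ^ 2 + b ^ 2))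
      (by fun_prop) (by simp) zero_le_one
  calc _ = ∫ q in (I ×ˢ I) ×ˢ (I ×ˢ I), √((q.1.1 - q.1.2) ^ 2 + (q.2.1 - q.2.2) ^ 2) :=
        setIntegral_prod_prod_prod_comm volume volume volume volume
          (fun q => √((q.1.1 - q.1.2) ^ 2 + (q.2.1 - q.2.2) ^ 2)) I I I I
    _ = ∫ z in I ×ˢ I, ∫ w in I ×ˢ I, √((z.1 - z.2) ^ 2 + (w.1 - w.2) ^ 2) :=
        setIntegral_prod _ <| (by fun_prop : Continuous _).continuousOn.integrableOn_compact <|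
          (isCompact_Icc.prod isCompact_Icc).prod (isCompact_Icc.prod isCompact_Icc)
    _ = 2 * ∫ s in 0..1, (1 - s) * k s := by
        simp only [hk]
        exact setIntegral_Icc_prod_Icc_comp_sub (by fun_prop) (by simp [k]) zero_le_one
    _ = _ := by
        simp only [k, mul_left_comm (1 - _) (2 : ℝ), intervalIntegral.integral_const_mul,
          integral_one_sub_mul_integral_one_sub_mul_sqrt]
        ring
end

section
/- Let O be a nonempty finite set of even cardinality and let w : O × O → ℝ be a cost function. Then the minimum, over all assignments Ω (finite sets of ordered pairs of distinct elements of O in which every element of O occurs in exactly one pair), of ∑_{(a,b) ∈ Ω} w(a,b) is equal to the minimum, over all perfect matchings M of the complete graph on O, of ∑_{{u,v} ∈ M} min(w(u,v), w(v,u)). (Hence the set of object-to-arm assignments minimizing total transfer cost is obtained by minimum-weight perfect matching on the undirected transfer graph whose edge weights keep the cheaper of the two orientations.) -/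
/-!
Forgetting the orientation of the pairs of an assignment gives a perfect matching of the
complete graph, and each pair costs at least the cheaper orientation of its edge, so every
assignment is dominated by a matching. Conversely, orienting every edge of a perfect matching
in its cheaper direction gives an assignment of exactly the matching's cost. Hence the two
sets of costs have the same infimum (both are empty when no assignment exists).
-/

open SimpleGraph

theorem Set.InjOn.existsUnique_mem_image_iff {α β : Type*} {f : α → β} {s : Set α}
    (hf : s.InjOn f) {P : β → Prop} :
    (∃! x, x ∈ s ∧ P (f x)) ↔ ∃! y, y ∈ f '' s ∧ P y := by
  constructor
  · rintro ⟨x, ⟨hx, hPx⟩, hxu⟩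
    refine ⟨f x, ⟨Set.mem_image_of_mem f hx, hPx⟩, ?_⟩
    rintro _ ⟨⟨x', hx', rfl⟩, hPx'⟩
    rw [hxu x' ⟨hx', hPx'⟩]
  · rintro ⟨_, ⟨⟨x, hx, rfl⟩, hPx⟩, hyu⟩
    refine ⟨x, ⟨hx, hPx⟩, fun x' hx' => hf hx'.1 hx ?_⟩
    exact hyu _ ⟨Set.mem_image_of_mem f hx'.1, hx'.2⟩

theorem Sym2.mem_uncurry_mk_iff {α : Type*} {a : α} {p : α × α} :
    a ∈ Sym2.mk.uncurry p ↔ p.1 = a ∨ p.2 = a := by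
  rw [Function.uncurry_apply_pair, Sym2.mem_iff, eq_comm, @eq_comm _ a]

namespace SimpleGraph.Subgraph

variable {V : Type*} {G : SimpleGraph V} {M : G.Subgraph}

theorem isPerfectMatching_iff_existsUnique_edge :
    M.IsPerfectMatching ↔ ∀ v, ∃! e, e ∈ M.edgeSet ∧ v ∈ e := by
  rw [isPerfectMatching_iff]
  refine forall_congr' fun v => ⟨?_, ?_⟩
  · rintro ⟨w, hvw, hwu⟩
    refine ⟨s(v, w), ⟨hvw, Sym2.mem_mk_left v w⟩, ?_⟩
    rintro e ⟨he, hve⟩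
    rw [← Sym2.other_spec hve] at he ⊢
    rw [hwu _ (Subgraph.mem_edgeSet.mp he)]
  · rintro ⟨e, ⟨he, hve⟩, heu⟩
    rw [← Sym2.other_spec hve] at he heu
    refine ⟨_, he, fun w hvw => ?_⟩
    exact Sym2.congr_right.mp (heu s(v, w) ⟨hvw, Sym2.mem_mk_left v w⟩)

theorem exists_isPerfectMatching_edgeSet_eq {E : Set (Sym2 V)} (hE : E ⊆ G.edgeSet)
    (huniq : ∀ v, ∃! e, e ∈ E ∧ v ∈ e) :
    ∃ M : G.Subgraph, M.IsPerfectMatching ∧ M.edgeSet = E := by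
  have hle : fromEdgeSet E ≤ G := by
    rw [← edgeSet_subset_edgeSet, edgeSet_fromEdgeSet]
    exact Set.sdiff_subset.trans hE
  have hedges : (toSubgraph _ hle).edgeSet = E := by
    ext e
    induction e using Sym2.ind with
    | _ a b =>
      change (fromEdgeSet E).Adj a b ↔ _
      rw [fromEdgeSet_adj, and_iff_left_iff_imp]
      exact fun hab => G.ne_of_adj (hE hab)
  refine ⟨_, isPerfectMatching_iff_existsUnique_edge.mpr ?_, hedges⟩
  rwa [hedges]

end SimpleGraph.Subgraph

section Assignment

variable {α : Type*}

def IsAssignment (Ω : Finset (α × α)) : Prop :=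
  (∀ p ∈ Ω, p.1 ≠ p.2) ∧ ∀ o, ∃! p, p ∈ Ω ∧ (p.1 = o ∨ p.2 = o)

theorem injOn_uncurry_mk_of_existsUnique {Ω : Finset (α × α)}
    (h : ∀ o, ∃! p, p ∈ Ω ∧ (p.1 = o ∨ p.2 = o)) :
    Set.InjOn Sym2.mk.uncurry (Ω : Set (α × α)) := by
  intro p hp q hq hpq
  have hq₁ : p.1 ∈ Sym2.mk.uncurry q := hpq ▸ Sym2.mem_uncurry_mk_iff.mpr (Or.inl rfl)
  exact (h p.1).unique ⟨hp, Or.inl rfl⟩ ⟨hq, Sym2.mem_uncurry_mk_iff.mp hq₁⟩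

theorem isAssignment_iff_of_injOn {Ω : Finset (α × α)}
    (hΩ : Set.InjOn Sym2.mk.uncurry (Ω : Set (α × α))) :
    IsAssignment Ω ↔ Sym2.mk.uncurry '' (Ω : Set (α × α)) ⊆ (⊤ : SimpleGraph α).edgeSet ∧
      ∀ o, ∃! e, e ∈ Sym2.mk.uncurry '' (Ω : Set (α × α)) ∧ o ∈ e := by
  refine and_congr ?_ (forall_congr' fun o => ?_)
  · rw [Set.image_subset_iff]
    simp [Set.subset_def]
  · simp only [← hΩ.existsUnique_mem_image_iff, Sym2.mem_uncurry_mk_iff, Finset.mem_coe]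

theorem IsAssignment.exists_isPerfectMatching {Ω : Finset (α × α)} (hΩ : IsAssignment Ω) :
    ∃ M : (⊤ : SimpleGraph α).Subgraph, M.IsPerfectMatching ∧
      M.edgeSet = Sym2.mk.uncurry '' (Ω : Set (α × α)) := by
  obtain ⟨hE, huniq⟩ := (isAssignment_iff_of_injOn (injOn_uncurry_mk_of_existsUnique hΩ.2)).mp hΩ
  exact Subgraph.exists_isPerfectMatching_edgeSet_eq hE huniq

theorem SimpleGraph.Subgraph.IsPerfectMatching.exists_isAssignment [Finite α]
    {M : (⊤ : SimpleGraph α).Subgraph} (hM : M.IsPerfectMatching) {f : Sym2 α → α × α}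
    (hf : Function.LeftInverse Sym2.mk.uncurry f) :
    ∃ Ω : Finset (α × α), IsAssignment Ω ∧ (Ω : Set (α × α)) = f '' M.edgeSet := by
  refine ⟨((Set.toFinite M.edgeSet).image f).toFinset, ?_, Set.Finite.coe_toFinset _⟩
  have hinj : Set.InjOn Sym2.mk.uncurry (f '' M.edgeSet) :=
    Set.InjOn.image_of_comp (hf.comp_eq_id ▸ Set.injOn_id _)
  rw [isAssignment_iff_of_injOn (by rwa [Set.Finite.coe_toFinset]), Set.Finite.coe_toFinset,
    hf.image_image]
  exact ⟨M.edgeSet_subset, Subgraph.isPerfectMatching_iff_existsUnique_edge.mp hM⟩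

end Assignment

section Cost

variable {α β : Type*} [LinearOrder β]

def minCost (w : α × α → β) : Sym2 α → β :=
  Sym2.lift ⟨fun u v => min (w (u, v)) (w (v, u)), fun _ _ => min_comm _ _⟩

theorem minCost_uncurry_mk_le (w : α × α → β) (p : α × α) :
    minCost w (Sym2.mk.uncurry p) ≤ w p :=
  min_le_left _ _

theorem exists_uncurry_mk_eq_and_eq_minCost (w : α × α → β) (e : Sym2 α) :
    ∃ p, Sym2.mk.uncurry p = e ∧ w p = minCost w e := by
  induction e using Sym2.ind with
  | _ a b =>
    rcases le_total (w (a, b)) (w (b, a)) with h | h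
    · exact ⟨(a, b), rfl, (min_eq_left h).symm⟩
    · exact ⟨(b, a), Sym2.eq_swap, (min_eq_right h).symm⟩

variable [AddCommMonoid β]

theorem SimpleGraph.Subgraph.IsPerfectMatching.exists_isAssignment_sum_eq [Finite α]
    {M : (⊤ : SimpleGraph α).Subgraph} (hM : M.IsPerfectMatching) (w : α × α → β) :
    ∃ Ω : Finset (α × α), IsAssignment Ω ∧ ∑ p ∈ Ω, w p = ∑ᶠ e ∈ M.edgeSet, minCost w e := by
  choose f hf hfw using exists_uncurry_mk_eq_and_eq_minCost w
  obtain ⟨Ω, hΩ, hΩf⟩ := hM.exists_isAssignment hf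
  refine ⟨Ω, hΩ, ?_⟩
  rw [← finsum_mem_coe_finset, hΩf, finsum_mem_image (Function.LeftInverse.injective hf).injOn]
  exact finsum_mem_congr rfl fun e _ => hfw e

theorem IsAssignment.exists_isPerfectMatching_minCost_le [IsOrderedAddMonoid β]
    {Ω : Finset (α × α)} (hΩ : IsAssignment Ω) (w : α × α → β) :
    ∃ M : (⊤ : SimpleGraph α).Subgraph, M.IsPerfectMatching ∧
      ∑ᶠ e ∈ M.edgeSet, minCost w e ≤ ∑ p ∈ Ω, w p := by
  obtain ⟨M, hM, hE⟩ := hΩ.exists_isPerfectMatching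
  refine ⟨M, hM, ?_⟩
  rw [hE, finsum_mem_image (injOn_uncurry_mk_of_existsUnique hΩ.2), finsum_mem_coe_finset]
  exact Finset.sum_le_sum fun p _ => minCost_uncurry_mk_le w p

end Cost

theorem stmt_16_general (O : Type*) [Fintype O] (w : O × O → ℝ) :
    sInf {c : ℝ | ∃ Ω : Finset (O × O),
        (∀ p ∈ Ω, p.1 ≠ p.2) ∧
        (∀ o : O, ∃! p, p ∈ Ω ∧ (p.1 = o ∨ p.2 = o)) ∧
        c = ∑ p ∈ Ω, w p}
      = sInf {c : ℝ | ∃ M : (⊤ : SimpleGraph O).Subgraph,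
        M.IsPerfectMatching ∧
        c = ∑ᶠ e ∈ M.edgeSet,
          Sym2.lift ⟨fun u v => min (w (u, v)) (w (v, u)),
            fun u v => min_comm _ _⟩ e} := by
  refine csInf_eq_csInf_of_forall_exists_le ?_ ?_
  · rintro _ ⟨Ω, hne, huniq, rfl⟩
    obtain ⟨M, hM, hle⟩ := IsAssignment.exists_isPerfectMatching_minCost_le ⟨hne, huniq⟩ w
    exact ⟨_, ⟨M, hM, rfl⟩, hle⟩
  · rintro _ ⟨M, hM, rfl⟩
    obtain ⟨Ω, ⟨hne, huniq⟩, hsum⟩ := hM.exists_isAssignment_sum_eq w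
    exact ⟨_, ⟨Ω, hne, huniq, rfl⟩, hsum.le⟩

/-- The minimum total transfer cost over all assignments (sets of ordered pairs of
distinct elements in which every element occurs exactly once) equals the minimum,
over all perfect matchings of the complete graph on `O`, of the sum over matched
edges of the cheaper of the two orientations of the cost `w`. -/
theorem stmt_16 (O : Type*) [Fintype O] [DecidableEq O] [Nonempty O]
    (heven : Even (Fintype.card O)) (w : O × O → ℝ) :
    sInf {c : ℝ | ∃ Ω : Finset (O × O),
        (∀ p ∈ Ω, p.1 ≠ p.2) ∧
        (∀ o : O, ∃! p, p ∈ Ω ∧ (p.1 = o ∨ p.2 = o)) ∧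
        c = ∑ p ∈ Ω, w p}
      = sInf {c : ℝ | ∃ M : (⊤ : SimpleGraph O).Subgraph,
        M.IsPerfectMatching ∧
        c = ∑ᶠ e ∈ M.edgeSet,
          Sym2.lift ⟨fun u v => min (w (u, v)) (w (v, u)),
            fun u v => min_comm _ _⟩ e} :=
  stmt_16_general O w
end
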